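/- There exists a universal constant C > 0 such that for every n ≥ 1 and every linear threshold function f : {−1,1}^n → {−1,1} (i.e., f(x) = sign(w₀ + Σ_{i=1}^n w_i x_i) for some reals w₀, …, w_n), there exists a set S ⊆ {1,…,n} with f̂(S)² ≥ 2^{−C·Inf(f)}. Equivalently, the Fourier min-entropy min_S log₂(1/f̂(S)²) of any linear threshold function is at most C·Inf(f). -/

import Mathlib

open Finset Real MeasureTheory ProbabilityTheory
open scoped Classical

/-- sign: maps z to 1 if z > 0 and to −1 if z ≤ 0. -/
noncomputable def sgn (z : ℝ) : ℝ := if 0 < z then 1 else -1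

/-- interpret a Bool as ±1. -/
def pm (b : Bool) : ℝ := if b then 1 else -1

/-- probability of an event under the uniform distribution on {−1,1}^n. -/
noncomputable def unifPr (n : ℕ) (E : (Fin n → Bool) → Prop) : ℝ :=
  ((Finset.univ : Finset (Fin n → Bool)).filter E).card / 2 ^ n

/-- expectation under the uniform distribution on {−1,1}^n. -/
noncomputable def unifExp (n : ℕ) (g : (Fin n → Bool) → ℝ) : ℝ :=
  (∑ x : Fin n → Bool, g x) / 2 ^ n

/-- flip the i-th coordinate. -/
def flipAt {n : ℕ} (i : Fin n) (x : Fin n → Bool) : Fin n → Bool :=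
  Function.update x i (!(x i))

/-- influence of coordinate i. -/
noncomputable def infl {n : ℕ} (f : (Fin n → Bool) → ℝ) (i : Fin n) : ℝ :=
  unifPr n (fun x => f x ≠ f (flipAt i x))

/-- total influence. -/
noncomputable def totalInfl {n : ℕ} (f : (Fin n → Bool) → ℝ) : ℝ :=
  ∑ i, infl f i

/-- Fourier coefficient f̂(S). -/
noncomputable def fCoeff {n : ℕ} (f : (Fin n → Bool) → ℝ) (S : Finset (Fin n)) : ℝ :=
  unifExp n (fun x => f x * ∏ i ∈ S, pm (x i))

/-- Fourier entropy with log base 2 (0 · log(1/0) is 0 by convention, which holds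
definitionally since `Real.log 0 = 0` in Mathlib). -/
noncomputable def fourierEntropy {n : ℕ} (f : (Fin n → Bool) → ℝ) : ℝ :=
  ∑ S : Finset (Fin n), (fCoeff f S) ^ 2 * Real.logb 2 (1 / (fCoeff f S) ^ 2)

/-- The linear threshold function with weights w₀, w₁, …, w_n. -/
noncomputable def ltf (n : ℕ) (w : Fin (n + 1) → ℝ) : (Fin n → Bool) → ℝ :=
  fun x => sgn (w 0 + ∑ i : Fin n, w i.succ * pm (x i))


/-!
Write `f = ltf n w = sgn ∘ L` with `L x = w₀ + ∑ wᵢ xᵢ`. The moment identities `𝔼 L² = ‖w‖²` and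
`𝔼 L⁴ ≤ 3 ‖w‖⁴`, together with the Hölder-type bound `(𝔼 L²)³ ≤ (𝔼 |L|)² 𝔼 L⁴`, give
`𝔼 |L| ≥ ‖w‖ / √3`. On the other hand `𝔼 |L| = 𝔼 [f L] = ∑ⱼ wⱼ f̂(Sⱼ)` over the sets `Sⱼ` of size
at most one, so by Cauchy–Schwarz the Fourier weight of `f` on levels `0` and `1` is at least `1/3`.
Since `|f̂({i})| ≤ Inf_i(f)`, these coefficients have `ℓ¹`-norm at most `1 + Inf(f)`, so one of them
satisfies `|f̂(S)| ≥ 1 / (3 (1 + Inf(f)))`, which beats `2^(-20 Inf(f))` once `Inf(f) > 1/2`.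
When `Inf(f) ≤ 1/2`, the Poincaré inequality `f̂(∅)² ≥ 1 - Inf(f)` suffices.
-/

open scoped BigOperators

lemma pm_not (b : Bool) : pm (!b) = -pm b := by cases b <;> simp [pm]

lemma abs_pm (b : Bool) : |pm b| = 1 := by cases b <;> simp [pm]

lemma sgn_mul_self (z : ℝ) : sgn z * z = |z| := by
  unfold sgn
  split_ifs with h
  · simp [abs_of_pos h]
  · simp [abs_of_nonpos (not_lt.mp h)]

lemma sgn_eq_one_or_eq_neg_one (z : ℝ) : sgn z = 1 ∨ sgn z = -1 := by
  unfold sgn; split_ifs <;> simp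

lemma flipAt_involutive {n : ℕ} (i : Fin n) : Function.Involutive (flipAt i) := by
  intro x; simp [flipAt]

lemma flipAt_apply_self {n : ℕ} (i : Fin n) (x : Fin n → Bool) : flipAt i x i = !x i :=
  Function.update_self _ _ _

lemma flipAt_zero_cons {n : ℕ} (b : Bool) (y : Fin n → Bool) :
    flipAt 0 (Fin.cons b y : Fin (n + 1) → Bool) = Fin.cons (!b) y := by
  ext j; cases j using Fin.cases <;> simp [flipAt]

lemma flipAt_succ_cons {n : ℕ} (i : Fin n) (b : Bool) (y : Fin n → Bool) :
    flipAt i.succ (Fin.cons b y : Fin (n + 1) → Bool) = Fin.cons b (flipAt i y) := by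
  ext j
  cases j using Fin.cases <;>
    simp [flipAt, Function.update_apply, eq_comm (a := (0 : Fin (n + 1)))]

lemma unifExp_eq_expect {n : ℕ} (g : (Fin n → Bool) → ℝ) : unifExp n g = 𝔼 x, g x := by
  simp [unifExp, Fintype.expect_eq_sum_div_card]

lemma unifPr_eq_expect {n : ℕ} (E : (Fin n → Bool) → Prop) [DecidablePred E] :
    unifPr n E = 𝔼 x, if E x then 1 else 0 := by
  simp only [unifPr, Fintype.expect_eq_sum_div_card, sum_boole, Fintype.card_fun, Fintype.card_bool,
    Fintype.card_fin, Nat.cast_pow, Nat.cast_ofNat]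
  congr

lemma expect_cube_succ {n : ℕ} (g : (Fin (n + 1) → Bool) → ℝ) :
    𝔼 x, g x = 𝔼 y, (g (Fin.cons true y) + g (Fin.cons false y)) / 2 := by
  rw [← Fintype.expect_equiv (Fin.consEquiv fun _ => Bool) _ g fun _ => rfl, ← univ_product_univ,
    expect_product, expect_comm]
  refine expect_congr rfl fun y _ => ?_
  rw [Fintype.expect_eq_sum_div_card, Fintype.sum_bool, Fintype.card_bool]
  rfl

lemma expect_comp_flipAt {n : ℕ} (i : Fin n) (g : (Fin n → Bool) → ℝ) :
    𝔼 x, g (flipAt i x) = 𝔼 x, g x :=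
  Fintype.expect_bijective _ (flipAt_involutive i).bijective _ _ fun _ => rfl

lemma sq_sub_eq_four_mul_ite {a b : ℝ} (ha : a = 1 ∨ a = -1) (hb : b = 1 ∨ b = -1) :
    (a - b) ^ 2 = 4 * if a ≠ b then 1 else 0 := by
  rcases ha with rfl | rfl <;> rcases hb with rfl | rfl <;> norm_num

lemma abs_sub_eq_two_mul_ite {a b : ℝ} (ha : a = 1 ∨ a = -1) (hb : b = 1 ∨ b = -1) :
    |a - b| = 2 * if a ≠ b then 1 else 0 := by
  rcases ha with rfl | rfl <;> rcases hb with rfl | rfl <;> norm_num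

lemma sq_expect_sub_expect_le {ι : Type*} [Fintype ι] [Nonempty ι] {g h : ι → ℝ}
    (hg : ∀ y, g y = 1 ∨ g y = -1) (hh : ∀ y, h y = 1 ∨ h y = -1) :
    (𝔼 y, g y - 𝔼 y, h y) ^ 2 ≤ 4 * 𝔼 y, if g y ≠ h y then 1 else 0 := by
  have hcs := expect_mul_sq_le_sq_mul_sq univ (fun _ => (1 : ℝ)) fun y => g y - h y
  simp only [one_mul, one_pow, Fintype.expect_one, expect_sub_distrib] at hcs
  simpa only [sq_sub_eq_four_mul_ite (hg _) (hh _), ← mul_expect] using hcs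

section Restriction

variable {n : ℕ} (f : (Fin (n + 1) → Bool) → ℝ)

lemma infl_zero_eq :
    infl f 0 = 𝔼 y, if f (Fin.cons true y) ≠ f (Fin.cons false y) then 1 else 0 := by
  rw [infl, unifPr_eq_expect, expect_cube_succ]
  refine expect_congr rfl fun y _ => ?_
  simp only [flipAt_zero_cons, Bool.not_true, Bool.not_false, ne_comm (a := f (Fin.cons false y))]
  ring

lemma infl_succ_eq (i : Fin n) :
    infl f i.succ =
      (infl (fun y => f (Fin.cons true y)) i + infl (fun y => f (Fin.cons false y)) i) / 2 := by
  simp only [infl, unifPr_eq_expect]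
  rw [expect_cube_succ, ← expect_add_distrib, expect_div]
  simp only [flipAt_succ_cons]

lemma totalInfl_succ_eq :
    totalInfl f = infl f 0 + (totalInfl (fun y => f (Fin.cons true y)) +
      totalInfl (fun y => f (Fin.cons false y))) / 2 := by
  rw [totalInfl, Fin.sum_univ_succ]
  simp only [infl_succ_eq, ← sum_div, sum_add_distrib]
  rfl

end Restriction

theorem one_sub_sq_expect_le_totalInfl : ∀ {n : ℕ} (f : (Fin n → Bool) → ℝ),
    (∀ x, f x = 1 ∨ f x = -1) → 1 - (𝔼 x, f x) ^ 2 ≤ totalInfl f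
  | 0, f, hf => by
    have hconst : (fun x => f x) = fun _ => f default :=
      funext fun x => congrArg f (Subsingleton.elim _ _)
    rw [hconst, Fintype.expect_const]
    rcases hf default with h | h <;> rw [h] <;> simp [totalInfl]
  | n + 1, f, hf => by
    set g : (Fin n → Bool) → ℝ := fun y => f (Fin.cons true y)
    set h : (Fin n → Bool) → ℝ := fun y => f (Fin.cons false y)
    have hg : ∀ y, g y = 1 ∨ g y = -1 := fun y => hf _
    have hh : ∀ y, h y = 1 ∨ h y = -1 := fun y => hf _
    have hg_ind := one_sub_sq_expect_le_totalInfl g hg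
    have hh_ind := one_sub_sq_expect_le_totalInfl h hh
    have hgh := sq_expect_sub_expect_le hg hh
    -- `1 - ((a + b) / 2) ^ 2 = ((1 - a ^ 2) + (1 - b ^ 2)) / 2 + (a - b) ^ 2 / 4`
    rw [totalInfl_succ_eq, infl_zero_eq, expect_cube_succ, ← expect_div, expect_add_distrib]
    linear_combination hg_ind / 2 + hh_ind / 2 + hgh / 4

lemma fCoeff_eq_expect {n : ℕ} (f : (Fin n → Bool) → ℝ) (S : Finset (Fin n)) :
    fCoeff f S = 𝔼 x, f x * ∏ i ∈ S, pm (x i) :=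
  unifExp_eq_expect _

lemma abs_fCoeff_singleton_le_infl {n : ℕ} {f : (Fin n → Bool) → ℝ}
    (hf : ∀ x, f x = 1 ∨ f x = -1) (i : Fin n) : |fCoeff f {i}| ≤ infl f i := by
  have hflip : 𝔼 x, f (flipAt i x) * pm (x i) = -fCoeff f {i} := by
    simp only [fCoeff_eq_expect, prod_singleton]
    rw [← expect_comp_flipAt i fun x => f x * pm (x i), ← expect_neg_distrib]
    refine expect_congr rfl fun x _ => ?_
    rw [flipAt_apply_self, pm_not]
    ring
  have htwice : 2 * fCoeff f {i} = 𝔼 x, (f x - f (flipAt i x)) * pm (x i) := by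
    simp only [sub_mul, expect_sub_distrib, hflip, fCoeff_eq_expect, prod_singleton]
    ring
  have hbound : |2 * fCoeff f {i}| ≤ 2 * infl f i := by
    rw [htwice, infl, unifPr_eq_expect, mul_expect]
    refine (abs_expect_le _ _).trans (expect_le_expect fun x _ => ?_)
    rw [abs_mul, abs_pm, mul_one, abs_sub_eq_two_mul_ite (hf _) (hf _)]
  rw [abs_mul, abs_two] at hbound
  linarith

def affineForm {n : ℕ} (c : ℝ) (a : Fin n → ℝ) (x : Fin n → Bool) : ℝ :=
  c + ∑ i, a i * pm (x i)

lemma affineForm_cons {n : ℕ} (c : ℝ) (a : Fin (n + 1) → ℝ) (b : Bool) (y : Fin n → Bool) :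
    affineForm c a (Fin.cons b y) = affineForm c (Fin.tail a) y + a 0 * pm b := by
  simp only [affineForm, Fin.sum_univ_succ, Fin.cons_zero, Fin.cons_succ, Fin.tail]
  ring

theorem expect_affineForm_sq : ∀ {n : ℕ} (c : ℝ) (a : Fin n → ℝ),
    𝔼 x, affineForm c a x ^ 2 = c ^ 2 + ∑ i, a i ^ 2
  | 0, c, a => by simp [affineForm]
  | n + 1, c, a => by
    have hpair : ∀ y, (affineForm c a (Fin.cons true y) ^ 2 +
        affineForm c a (Fin.cons false y) ^ 2) / 2 = affineForm c (Fin.tail a) y ^ 2 + a 0 ^ 2 :=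
      fun y => by
        simp only [affineForm_cons, pm, Bool.false_eq_true, reduceIte]
        ring
    simp only [expect_cube_succ, hpair, expect_add_distrib, Fintype.expect_const,
      expect_affineForm_sq c (Fin.tail a), Fin.sum_univ_succ, Fin.tail]
    ring

theorem expect_affineForm_pow_four_le : ∀ {n : ℕ} (c : ℝ) (a : Fin n → ℝ),
    𝔼 x, affineForm c a x ^ 4 ≤ 3 * (c ^ 2 + ∑ i, a i ^ 2) ^ 2
  | 0, c, a => by simp [affineForm]; nlinarith [sq_nonneg (c ^ 2)]
  | n + 1, c, a => by
    have hpair : ∀ y, (affineForm c a (Fin.cons true y) ^ 4 +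
        affineForm c a (Fin.cons false y) ^ 4) / 2 = affineForm c (Fin.tail a) y ^ 4 +
          6 * a 0 ^ 2 * affineForm c (Fin.tail a) y ^ 2 + a 0 ^ 4 :=
      fun y => by
        simp only [affineForm_cons, pm, Bool.false_eq_true, reduceIte]
        ring
    have h4 := expect_affineForm_pow_four_le c (Fin.tail a)
    simp only [expect_cube_succ, hpair, expect_add_distrib, Fintype.expect_const, ← mul_expect,
      expect_affineForm_sq c (Fin.tail a)]
    simp only [Fin.sum_univ_succ, Fin.tail] at h4 ⊢
    nlinarith [sq_nonneg (a 0)]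

theorem expect_sq_pow_three_le {ι : Type*} (s : Finset ι) (g : ι → ℝ) :
    (𝔼 i ∈ s, g i ^ 2) ^ 3 ≤ (𝔼 i ∈ s, |g i|) ^ 2 * 𝔼 i ∈ s, g i ^ 4 := by
  set A₁ := 𝔼 i ∈ s, |g i|
  set A₂ := 𝔼 i ∈ s, g i ^ 2
  set A₃ := 𝔼 i ∈ s, |g i| ^ 3
  set A₄ := 𝔼 i ∈ s, g i ^ 4
  have h₁ : A₂ ^ 2 ≤ A₁ * A₃ := by
    have hcs := expect_mul_sq_le_sq_mul_sq s (fun i => √|g i|) fun i => √|g i| * |g i|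
    have hsqrt : ∀ i, √|g i| ^ 2 = |g i| := fun i => sq_sqrt (abs_nonneg _)
    have hmul : ∀ i, √|g i| * (√|g i| * |g i|) = g i ^ 2 := fun i => by
      rw [← mul_assoc, ← sq, hsqrt, ← sq, sq_abs]
    have hcube : ∀ i, (√|g i| * |g i|) ^ 2 = |g i| ^ 3 := fun i => by
      rw [mul_pow, hsqrt]; ring
    simpa only [hmul, hsqrt, hcube] using hcs
  have h₂ : A₃ ^ 2 ≤ A₂ * A₄ := by
    have hcs := expect_mul_sq_le_sq_mul_sq s (fun i => |g i|) fun i => g i ^ 2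
    have hcube : ∀ i, |g i| * g i ^ 2 = |g i| ^ 3 := fun i => by rw [← sq_abs]; ring
    simpa only [hcube, sq_abs, ← pow_mul] using hcs
  have hA₂ : 0 ≤ A₂ := expect_nonneg fun i _ => sq_nonneg _
  rcases hA₂.eq_or_lt with h0 | hpos
  · rw [← h0, zero_pow three_ne_zero]
    exact mul_nonneg (sq_nonneg _) (expect_nonneg fun i _ => by positivity)
  · refine le_of_mul_le_mul_right ?_ hpos
    calc A₂ ^ 3 * A₂ = (A₂ ^ 2) ^ 2 := by ring
      _ ≤ (A₁ * A₃) ^ 2 := pow_le_pow_left₀ (sq_nonneg _) h₁ 2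
      _ = A₁ ^ 2 * A₃ ^ 2 := by ring
      _ ≤ A₁ ^ 2 * (A₂ * A₄) := by gcongr
      _ = A₁ ^ 2 * A₄ * A₂ := by ring

/-- Indexed like the weights of `ltf`: `0 ↦ ∅` and `i.succ ↦ {i}`. -/
def lowSet {n : ℕ} (j : Fin (n + 1)) : Finset (Fin n) :=
  Fin.cases ∅ (fun i => {i}) j

lemma expect_mul_affineForm {n : ℕ} (g : (Fin n → Bool) → ℝ) (w : Fin (n + 1) → ℝ) :
    𝔼 x, g x * affineForm (w 0) (Fin.tail w) x = ∑ j, w j * fCoeff g (lowSet j) := by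
  simp only [affineForm, mul_add, mul_sum, expect_add_distrib, expect_sum_comm, Fin.sum_univ_succ,
    lowSet, Fin.cases_zero, Fin.cases_succ, fCoeff_eq_expect, prod_empty, prod_singleton,
    mul_expect, Fin.tail]
  congr 1
  · simp only [mul_one, mul_comm]
  · refine sum_congr rfl fun i _ => expect_congr rfl fun x _ => ?_
    ring

theorem one_third_le_sum_sq_fCoeff_lowSet (n : ℕ) (w : Fin (n + 1) → ℝ) :
    1 / 3 ≤ ∑ j, fCoeff (ltf n w) (lowSet j) ^ 2 := by
  set f := ltf n w
  set L := affineForm (w 0) (Fin.tail w)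
  set T := ∑ j, w j ^ 2
  set W := ∑ j, fCoeff f (lowSet j) ^ 2
  have hT : w 0 ^ 2 + ∑ i, Fin.tail w i ^ 2 = T := (Fin.sum_univ_succ fun j => w j ^ 2).symm
  have hL₂ : 𝔼 x, L x ^ 2 = T := hT ▸ expect_affineForm_sq _ _
  have hL₄ : 𝔼 x, L x ^ 4 ≤ 3 * T ^ 2 := hT ▸ expect_affineForm_pow_four_le _ _
  have hL₁ : 𝔼 x, |L x| = ∑ j, w j * fCoeff f (lowSet j) := by
    rw [← expect_mul_affineForm]
    exact expect_congr rfl fun x _ => (sgn_mul_self _).symm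
  have hcs : (𝔼 x, |L x|) ^ 2 ≤ T * W := hL₁ ▸ sum_mul_sq_le_sq_mul_sq _ _ _
  have hholder := expect_sq_pow_three_le univ L
  rw [hL₂] at hholder
  rcases (sum_nonneg fun j _ => sq_nonneg (w j) : 0 ≤ T).eq_or_lt with hT0 | hTpos
  · have hw : w = 0 := by
      have := (Fintype.sum_eq_zero_iff_of_nonneg fun j => sq_nonneg (w j)).mp hT0.symm
      funext j
      simpa using congrFun this j
    have hf : fCoeff f (lowSet 0) = -1 := by
      simp [f, hw, fCoeff_eq_expect, lowSet, ltf, sgn]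
    calc (1 : ℝ) / 3 ≤ fCoeff f (lowSet 0) ^ 2 := by rw [hf]; norm_num
      _ ≤ W := single_le_sum (fun j _ => sq_nonneg (fCoeff f (lowSet j))) (mem_univ 0)
  · have : T ^ 3 ≤ 3 * T ^ 3 * W := by
      calc T ^ 3 ≤ (𝔼 x, |L x|) ^ 2 * 𝔼 x, L x ^ 4 := hholder
        _ ≤ (T * W) * (3 * T ^ 2) := by gcongr
        _ = 3 * T ^ 3 * W := by ring
    nlinarith [pow_pos hTpos 3]

lemma exists_sum_sq_le_abs_mul_sum_abs {ι : Type*} [Fintype ι] [Nonempty ι] (v : ι → ℝ) :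
    ∃ j, ∑ i, v i ^ 2 ≤ |v j| * ∑ i, |v i| := by
  obtain ⟨j, hj⟩ := Finite.exists_max fun i => |v i|
  refine ⟨j, ?_⟩
  rw [mul_sum]
  refine sum_le_sum fun i _ => ?_
  rw [← sq_abs, sq]
  exact mul_le_mul_of_nonneg_right (hj i) (abs_nonneg _)

lemma sum_abs_fCoeff_lowSet_le {n : ℕ} {f : (Fin n → Bool) → ℝ}
    (hf : ∀ x, f x = 1 ∨ f x = -1) : ∑ j, |fCoeff f (lowSet j)| ≤ 1 + totalInfl f := by
  rw [Fin.sum_univ_succ, totalInfl]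
  gcongr with i
  · simp only [lowSet, Fin.cases_zero, fCoeff_eq_expect, prod_empty, mul_one]
    refine (abs_expect_le _ _).trans (expect_le univ_nonempty fun x _ => ?_)
    rcases hf x with h | h <;> simp [h]
  · exact abs_fCoeff_singleton_le_infl hf i

lemma two_rpow_neg_le {t : ℝ} (ht : 0 ≤ t) : (2 : ℝ) ^ (-t) ≤ ((1 + t * log 2 / 2) ^ 2)⁻¹ := by
  have hexp : (2 : ℝ) ^ (-t) = (exp (t * log 2 / 2) ^ 2)⁻¹ := by
    rw [rpow_def_of_pos two_pos, ← exp_nat_mul, ← exp_neg]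
    ring_nf
  rw [hexp]
  have : 0 < 1 + t * log 2 / 2 := by positivity
  gcongr
  linarith [add_one_le_exp (t * log 2 / 2)]

/-- the Fourier Min-Entropy–Influence conjecture holds for LTFs. -/
theorem fmei_for_ltf :
    ∃ C : ℝ, 0 < C ∧ ∀ n : ℕ, 1 ≤ n → ∀ w : Fin (n + 1) → ℝ,
      ∃ S : Finset (Fin n),
        (fCoeff (ltf n w) S) ^ 2 ≥ 2 ^ (-C * totalInfl (ltf n w)) := by
  refine ⟨40, by norm_num, fun n _ w => ?_⟩
  set f := ltf n w
  set I := totalInfl f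
  have hf : ∀ x, f x = 1 ∨ f x = -1 := fun x => sgn_eq_one_or_eq_neg_one _
  have hI : 0 ≤ I := sum_nonneg fun i _ => by unfold infl unifPr; positivity
  have hlog := Real.log_two_gt_d9
  have hdecay : (2 : ℝ) ^ (-40 * I) ≤ ((1 + 20 * I * log 2) ^ 2)⁻¹ := by
    convert two_rpow_neg_le (by positivity : 0 ≤ 40 * I) using 3 <;> ring
  have hlog_mul : 13 * I ≤ 20 * I * log 2 := by nlinarith
  rcases le_or_gt I (1 / 2) with hsmall | hlarge
  · have hpoincare : 1 - I ≤ fCoeff f ∅ ^ 2 := by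
      have := one_sub_sq_expect_le_totalInfl f hf
      simp only [fCoeff_eq_expect, prod_empty, mul_one]
      linarith
    refine ⟨∅, hdecay.trans (le_trans ?_ hpoincare)⟩
    rw [inv_le_iff_one_le_mul₀ (by positivity)]
    calc (1 : ℝ) ≤ (1 - I) * (1 + 26 * I) := by nlinarith
      _ ≤ (1 - I) * (1 + 20 * I * log 2) ^ 2 := by
        gcongr
        · linarith
        · nlinarith
  · set v := fun j => fCoeff f (lowSet j)
    obtain ⟨j, hj⟩ := exists_sum_sq_le_abs_mul_sum_abs v
    have hW : 1 / 3 ≤ ∑ j, v j ^ 2 := one_third_le_sum_sq_fCoeff_lowSet n w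
    have hS : ∑ j, |v j| ≤ 1 + I := sum_abs_fCoeff_lowSet_le hf
    have hv : 1 ≤ |v j| * (1 + 20 * I * log 2) := by
      have := hj.trans (mul_le_mul_of_nonneg_left hS (abs_nonneg (v j)))
      calc (1 : ℝ) ≤ |v j| * (3 * (1 + I)) := by linarith
        _ ≤ |v j| * (1 + 20 * I * log 2) := by gcongr; linarith
    refine ⟨lowSet j, hdecay.trans ?_⟩
    rw [inv_le_iff_one_le_mul₀ (by positivity), ← sq_abs, ← mul_pow]
    exact one_le_pow₀ hv
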